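/- Let λ ⊢ n−1, let T ∈ SYT(λ^□) with δ(T) = n, and let π ∈ S_n be the inverse reading word of T (note π(n) = n). Then for every 0 ≤ k < n: the inverse reading word of the rotated tableau k+T is π c^{−k}, and cDes_rot(k+T) = cDes(π c^{−k}); in particular Des(k+T) = Des(π c^{−k}). -/

import Mathlib

open scoped Classical

noncomputable section

namespace SchurRot

/-! ### Permutations -/

/-- The value of the permutation `π ∈ S_n` (in one-line notation, with positions and
values `1,…,n`) at position `i ∈ [1,n]`. -/
def permVal {n : ℕ} (π : Equiv.Perm (Fin n)) (i : ℕ) : ℕ :=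
  if h : i - 1 < n then ((π ⟨i - 1, h⟩ : Fin n) : ℕ) + 1 else 0

/-- The descent set `Des(π) = {i ∈ [n-1] : π(i) > π(i+1)}`. -/
def DesPerm {n : ℕ} (π : Equiv.Perm (Fin n)) : Finset ℕ :=
  (Finset.Icc 1 (n - 1)).filter fun i => permVal π (i + 1) < permVal π i

/-- The cyclic descent set of `π ∈ S_n`: `Des(π)`, with `n` added iff `π(n) > π(1)`. -/
def cDesPerm {n : ℕ} (π : Equiv.Perm (Fin n)) : Finset ℕ :=
  if permVal π 1 < permVal π n then insert n (DesPerm π) else DesPerm π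

/-- `π ∈ S_n` fixes the letter `n` (so it can be viewed as an element of `S_{n-1}`). -/
def FixesTop {n : ℕ} (π : Equiv.Perm (Fin n)) : Prop :=
  ∀ i : Fin n, (i : ℕ) = n - 1 → π i = i

/-! ### Quasisymmetric and symmetric functions, in variables `x_1, x_2, …`
indexed by positive natural numbers (the variable `x_0` is unused). -/

/-- The fundamental quasisymmetric function `F_{n,D}`, as a formal power series in the
variables `x_i, i ∈ ℕ` (only variables with positive index are used): the coefficient of
a monomial `m` is the number of weakly increasing sequences `1 ≤ i_1 ≤ … ≤ i_n`, strictly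
increasing at positions in `D`, with content monomial `m`. -/
def Fqs (n : ℕ) (D : Finset ℕ) : MvPowerSeries ℕ ℤ :=
  fun m => (Set.ncard {g : Fin n → ℕ |
    (∀ p, 1 ≤ g p) ∧ Monotone g ∧
    (∀ j ∈ D, ∀ (h1 : j - 1 < n) (h2 : j < n), g ⟨j - 1, h1⟩ < g ⟨j, h2⟩) ∧
    (∑ p, Finsupp.single (g p) (1 : ℕ)) = m} : ℤ)

/-- `Q(B) = Σ_{π ∈ B} F_{m, Des(π)}` for a finite set `B` of permutations. -/
def Qset (m : ℕ) {n : ℕ} (B : Finset (Equiv.Perm (Fin n))) : MvPowerSeries ℕ ℤ :=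
  ∑ π ∈ B, Fqs m (DesPerm π)

/-- `Q(B)` for a multiset `B` of permutations, counted with multiplicity. -/
def Qmult (m : ℕ) {n : ℕ} (B : Multiset (Equiv.Perm (Fin n))) : MvPowerSeries ℕ ℤ :=
  (B.map fun π => Fqs m (DesPerm π)).sum

/-- The set `A·C_n = {π c^k : π ∈ A, 0 ≤ k < n}`, where `c = finRotate n` is the
`n`-cycle `(1,2,…,n)`. -/
def ACn {n : ℕ} (A : Finset (Equiv.Perm (Fin n))) : Finset (Equiv.Perm (Fin n)) :=
  (A ×ˢ Finset.range n).image fun p => p.1 * (finRotate n) ^ p.2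

/-- The multiset `A·C_n`, counted with multiplicities. -/
def ACmult {n : ℕ} (A : Multiset (Equiv.Perm (Fin n))) : Multiset (Equiv.Perm (Fin n)) :=
  A.bind fun π => (Multiset.range n).map fun k => π * (finRotate n) ^ k

/-- A formal power series in the variables `x_i, i ∈ ℕ` is a symmetric function if its
coefficients are invariant under every permutation of the variables. -/
def IsSymmFn (f : MvPowerSeries ℕ ℤ) : Prop :=
  ∀ (σ : Equiv.Perm ℕ) (m : ℕ →₀ ℕ),
    MvPowerSeries.coeff (Finsupp.equivMapDomain σ m) f = MvPowerSeries.coeff m f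

/-! ### Tableaux: fillings of an arbitrary finite cell set (in English notation,
cell `(i,j)` is in row `i` (increasing downwards) and column `j`). -/

/-- A semistandard filling of `cells` (entries ≥ 1, weakly increasing along rows,
strictly increasing down columns, `0` outside `cells`). -/
def IsSSYT (cells : Finset (ℕ × ℕ)) (g : ℕ × ℕ → ℕ) : Prop :=
  (∀ c, c ∉ cells → g c = 0) ∧ (∀ c ∈ cells, 1 ≤ g c) ∧
  (∀ a ∈ cells, ∀ b ∈ cells, a.1 = b.1 → a.2 ≤ b.2 → g a ≤ g b) ∧
  (∀ a ∈ cells, ∀ b ∈ cells, a.2 = b.2 → a.1 < b.1 → g a < g b)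

/-- The content monomial of a filling. -/
def contentOf (cells : Finset (ℕ × ℕ)) (g : ℕ × ℕ → ℕ) : ℕ →₀ ℕ :=
  ∑ c ∈ cells, Finsupp.single (g c) 1

/-- The (skew) Schur function of an arbitrary finite cell set: the sum, over all
semistandard fillings, of their content monomials. -/
def schurOf (cells : Finset (ℕ × ℕ)) : MvPowerSeries ℕ ℤ :=
  fun m => (Set.ncard {g : ℕ × ℕ → ℕ | IsSSYT cells g ∧ contentOf cells g = m} : ℤ)

/-- `f` is Schur-positive of degree `m`: a nonnegative integer combination of Schur
functions of partitions of `m` (encoded by a multiset of Young diagrams). -/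
def SchurPositive (m : ℕ) (f : MvPowerSeries ℕ ℤ) : Prop :=
  ∃ M : Multiset YoungDiagram, (∀ μ ∈ M, μ.cells.card = m) ∧
    f = (M.map fun μ => schurOf μ.cells).sum

/-! ### Standard fillings, rotation, reading words -/

/-- A filling of `cells` by the letters `1,…,n`, each used exactly once (and `0`
outside `cells`). -/
def IsFillingF (n : ℕ) (cells : Finset (ℕ × ℕ)) (f : ℕ × ℕ → ℕ) : Prop :=
  Set.BijOn f ↑cells (Set.Icc 1 n) ∧ ∀ c, c ∉ cells → f c = 0

/-- A filling is standard if its rows and columns increase. -/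
def IsStandardF (cells : Finset (ℕ × ℕ)) (f : ℕ × ℕ → ℕ) : Prop :=
  (∀ a ∈ cells, ∀ b ∈ cells, a.1 = b.1 → a.2 < b.2 → f a < f b) ∧
  (∀ a ∈ cells, ∀ b ∈ cells, a.2 = b.2 → a.1 < b.1 → f a < f b)

/-- Addition of `k` modulo `n` on the letters `1,…,n` (with `0` identified with `n`). -/
def rotval (n k e : ℕ) : ℕ := (e + k - 1) % n + 1

/-- Addition of an integer `k` modulo `n` on the letters `1,…,n`. -/
def rotvalZ (n : ℕ) (k : ℤ) (e : ℕ) : ℕ := (((e : ℤ) + k - 1) % (n : ℤ)).toNat + 1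

/-- Apply `φ` to every entry of a filling (keeping `0` outside `cells`);
e.g. `mapEntries cells (rotval n k) T` is the rotated tableau `k + T`. -/
def mapEntries (cells : Finset (ℕ × ℕ)) (φ : ℕ → ℕ) (f : ℕ × ℕ → ℕ) : ℕ × ℕ → ℕ :=
  fun c => if c ∈ cells then φ (f c) else 0

/-- The row containing the entry `e`. -/
def rowOf (cells : Finset (ℕ × ℕ)) (f : ℕ × ℕ → ℕ) (e : ℕ) : ℕ :=
  sInf {i | ∃ j, (i, j) ∈ cells ∧ f (i, j) = e}

/-- The cell containing the entry `e`. -/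
def cellOf (cells : Finset (ℕ × ℕ)) (f : ℕ × ℕ → ℕ) (e : ℕ) : ℕ × ℕ :=
  (rowOf cells f e,
    sInf {j | (rowOf cells f e, j) ∈ cells ∧ f (rowOf cells f e, j) = e})

/-- The cyclic descent set of a (rotated) filling of size `n`:
`{i ∈ [n] : i+1 (mod n) lies in a strictly lower row than i}`. -/
def cDesRot (n : ℕ) (cells : Finset (ℕ × ℕ)) (f : ℕ × ℕ → ℕ) : Finset ℕ :=
  (Finset.Icc 1 n).filter fun i => rowOf cells f i < rowOf cells f (rotval n 1 i)

/-- The descent set of a filling of size `n`: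
`{i ∈ [n-1] : i+1 lies in a strictly lower row than i}`. -/
def DesTab (n : ℕ) (cells : Finset (ℕ × ℕ)) (f : ℕ × ℕ → ℕ) : Finset ℕ :=
  (Finset.Icc 1 (n - 1)).filter fun i => rowOf cells f i < rowOf cells f (i + 1)

/-- `a` comes before `b` in reading order (rows left to right, bottom row first). -/
def readBefore (a b : ℕ × ℕ) : Prop :=
  b.1 < a.1 ∨ (a.1 = b.1 ∧ a.2 < b.2)

/-- The (1-indexed) position of the cell `c` in the reading order of `cells`. -/
def posInRead (cells : Finset (ℕ × ℕ)) (c : ℕ × ℕ) : ℕ :=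
  (cells.filter fun c' => readBefore c' c).card + 1

/-- The value at `e` of the inverse of the reading word of the filling `f`, i.e. the
position of the entry `e` in the reading word. -/
def invReadVal (cells : Finset (ℕ × ℕ)) (f : ℕ × ℕ → ℕ) (e : ℕ) : ℕ :=
  posInRead cells (cellOf cells f e)

/-- `A_λ` (for `cells` the diagram of `λ ⊢ m`): the set of permutations in `S_m` that are
inverse reading words of standard Young tableaux of shape `λ`. -/
def invWordSet (m : ℕ) (cells : Finset (ℕ × ℕ)) : Finset (Equiv.Perm (Fin m)) :=
  Finset.univ.filter fun π => ∃ f : ℕ × ℕ → ℕ,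
    IsFillingF m cells f ∧ IsStandardF cells f ∧
    ∀ e ∈ Finset.Icc 1 m, permVal π e = invReadVal cells f e

/-! ### The jeu-de-taquin type straightening algorithms -/

/-- The entry `i` is short: some entry immediately above it or immediately to its left
is larger. -/
def IsShort (cells : Finset (ℕ × ℕ)) (f : ℕ × ℕ → ℕ) (i : ℕ) : Prop :=
  ∃ c ∈ cells, f c = i ∧
    ((1 ≤ c.1 ∧ (c.1 - 1, c.2) ∈ cells ∧ i < f (c.1 - 1, c.2)) ∨
     (1 ≤ c.2 ∧ (c.1, c.2 - 1) ∈ cells ∧ i < f (c.1, c.2 - 1)))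

/-- The entry `i` is tall: some entry immediately below it or immediately to its right
is smaller. -/
def IsTall (cells : Finset (ℕ × ℕ)) (f : ℕ × ℕ → ℕ) (i : ℕ) : Prop :=
  ∃ c ∈ cells, f c = i ∧
    (((c.1 + 1, c.2) ∈ cells ∧ f (c.1 + 1, c.2) < i) ∨
     ((c.1, c.2 + 1) ∈ cells ∧ f (c.1, c.2 + 1) < i))

def shorts (n : ℕ) (cells : Finset (ℕ × ℕ)) (f : ℕ × ℕ → ℕ) : Finset ℕ :=
  (Finset.Icc 1 n).filter fun i => IsShort cells f i

def talls (n : ℕ) (cells : Finset (ℕ × ℕ)) (f : ℕ × ℕ → ℕ) : Finset ℕ :=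
  (Finset.Icc 1 n).filter fun i => IsTall cells f i

/-- One elementary step of `jdt`: take the minimal short entry `i` and switch it with
the larger of the entries immediately above it and immediately to its left. -/
def stepFun (n : ℕ) (cells : Finset (ℕ × ℕ)) (f : ℕ × ℕ → ℕ) : ℕ × ℕ → ℕ :=
  if h : (shorts n cells f).Nonempty then
    let i := (shorts n cells f).min' h
    let c := cellOf cells f i
    let av := if 1 ≤ c.1 ∧ (c.1 - 1, c.2) ∈ cells then f (c.1 - 1, c.2) else 0
    let lv := if 1 ≤ c.2 ∧ (c.1, c.2 - 1) ∈ cells then f (c.1, c.2 - 1) else 0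
    mapEntries cells (Equiv.swap i (max av lv)) f
  else f

/-- One elementary step of `ijdt`: take the maximal tall entry `i` and switch it with
the smaller of the entries immediately below it and immediately to its right. -/
def istepFun (n : ℕ) (cells : Finset (ℕ × ℕ)) (f : ℕ × ℕ → ℕ) : ℕ × ℕ → ℕ :=
  if h : (talls n cells f).Nonempty then
    let i := (talls n cells f).max' h
    let c := cellOf cells f i
    let bv := if (c.1 + 1, c.2) ∈ cells then f (c.1 + 1, c.2) else n + 1
    let rv := if (c.1, c.2 + 1) ∈ cells then f (c.1, c.2 + 1) else n + 1
    mapEntries cells (Equiv.swap i (min bv rv)) f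
  else f

/-- The straightening `jdt`: repeat the elementary step until the filling is standard. -/
def jdtFun (n : ℕ) (cells : Finset (ℕ × ℕ)) (f : ℕ × ℕ → ℕ) : ℕ × ℕ → ℕ :=
  if h : ∃ m, IsStandardF cells ((stepFun n cells)^[m] f) then
    (stepFun n cells)^[Nat.find h] f
  else f

/-- The straightening `ijdt`: repeat the reverse elementary step until the filling is
standard. -/
def ijdtFun (n : ℕ) (cells : Finset (ℕ × ℕ)) (f : ℕ × ℕ → ℕ) : ℕ × ℕ → ℕ :=
  if h : ∃ m, IsStandardF cells ((istepFun n cells)^[m] f) then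
    (istepFun n cells)^[Nat.find h] f
  else f

/-! ### The shape `λ^□` -/

/-- The cell of the disconnected box of `λ^□`, strictly north and strictly east of `λ`. -/
def boxCell (lam : YoungDiagram) : ℕ × ℕ := (0, lam.rowLen 0)

/-- The skew shape `λ^□`: `λ` (shifted one row down) together with one disconnected box
at its upper right corner. -/
def boxShape (lam : YoungDiagram) : Finset (ℕ × ℕ) :=
  insert (boxCell lam) (lam.cells.image fun c => (c.1 + 1, c.2))

/-- `δ(P)`: the entry of the disconnected box of a filling of `λ^□`. -/
def deltaOf (lam : YoungDiagram) (f : ℕ × ℕ → ℕ) : ℕ := f (boxCell lam)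

/-- The inverse of `jdt` on `SYT(λ^□)`: `jdt⁻¹(P) = δ(P) + ijdt(-δ(P) + P)`. -/
def jdtInvFun (n : ℕ) (lam : YoungDiagram) (P : ℕ × ℕ → ℕ) : ℕ × ℕ → ℕ :=
  mapEntries (boxShape lam) (rotval n (deltaOf lam P))
    (ijdtFun n (boxShape lam)
      (mapEntries (boxShape lam) (rotval n (n - deltaOf lam P)) P))

/-- The cyclic descent set of `P ∈ SYT(λ^□)`: `cDes(P) = cDes_rot(jdt⁻¹(P))`. -/
def cDesBox (n : ℕ) (lam : YoungDiagram) (P : ℕ × ℕ → ℕ) : Finset ℕ :=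
  cDesRot n (boxShape lam) (jdtInvFun n lam P)

/-- The restriction of `f` to the entries in `S` is standard: there are no two entries
in `S` in which the smaller one lies weakly south and weakly east of the larger one. -/
def RestrictedStd (cells : Finset (ℕ × ℕ)) (f : ℕ × ℕ → ℕ) (S : Finset ℕ) : Prop :=
  ∀ a ∈ cells, ∀ b ∈ cells, f a ∈ S → f b ∈ S →
    a.1 ≤ b.1 → a.2 ≤ b.2 → a ≠ b → f a < f b

end SchurRot


noncomputable section
namespace SchurRot

/-!
Adding `k` to every entry moves the letter `a` into the cell that held `a - k`, so the reading
word of `k + T` is that of `T` composed with a rotation, i.e. `π c⁻ᵏ`; the same relabelling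
carries the comparison of rows of `i` and `i + 1 (mod n)` from `T` to `k + T`. In `T` itself,
`i + 1 (mod n)` lies in a lower row than `i` exactly when it is read earlier: rows are read
bottom-up, and two consecutive letters sharing a row stand left to right by standardness. The
cyclic pair `(n, 1)` never shares a row, since `n` fills the only cell of the top row.
-/

open Equiv

lemma rotval_mem_Icc {n : ℕ} (hn : 0 < n) (k e : ℕ) : rotval n k e ∈ Set.Icc 1 n := by
  have := Nat.mod_lt (e + k - 1) hn
  unfold rotval
  constructor <;> omega

lemma rotval_rotval (n a b : ℕ) {e : ℕ} (he : 1 ≤ e) :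
    rotval n a (rotval n b e) = rotval n (a + b) e := by
  unfold rotval
  rw [show (e + b - 1) % n + 1 + a - 1 = (e + b - 1) % n + a by omega, Nat.mod_add_mod]
  congr 2
  omega

lemma rotval_comm (n a b : ℕ) {e : ℕ} (he : 1 ≤ e) :
    rotval n a (rotval n b e) = rotval n b (rotval n a e) := by
  rw [rotval_rotval n a b he, rotval_rotval n b a he, Nat.add_comm]

lemma rotval_mul_self {n e : ℕ} (m : ℕ) (he : e ∈ Set.Icc 1 n) : rotval n (n * m) e = e := by
  obtain ⟨h1, h2⟩ := he
  unfold rotval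
  rw [Nat.sub_add_comm h1, Nat.add_mul_mod_self_left, Nat.mod_eq_of_lt (by omega)]
  omega

lemma rotval_bijOn {n : ℕ} (hn : 0 < n) (k : ℕ) :
    Set.BijOn (rotval n k) (Set.Icc 1 n) (Set.Icc 1 n) := by
  -- `n * k - k ≡ -k (mod n)`, and the subtraction does not truncate
  have hk : k ≤ n * k := Nat.le_mul_of_pos_left k hn
  refine Set.InvOn.bijOn (f' := rotval n (n * k - k)) ⟨fun e he => ?_, fun e he => ?_⟩
    (fun e _ => rotval_mem_Icc hn k e) (fun e _ => rotval_mem_Icc hn _ e)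
  · rw [rotval_rotval n _ _ he.1, Nat.sub_add_cancel hk, rotval_mul_self k he]
  · rw [rotval_rotval n _ _ he.1, Nat.add_sub_cancel' hk, rotval_mul_self k he]

lemma rotval_one_of_lt {n i : ℕ} (h : i < n) : rotval n 1 i = i + 1 := by
  unfold rotval
  rw [Nat.add_sub_cancel, Nat.mod_eq_of_lt h]

lemma rotval_one_self (n : ℕ) : rotval n 1 n = 1 := by
  unfold rotval
  rw [Nat.add_sub_cancel, Nat.mod_self]

lemma coe_finRotate_pow_apply {n : ℕ} (i : Fin n) (k : ℕ) :
    ((finRotate n ^ k) i : ℕ) = (i + k) % n := by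
  induction k with
  | zero => simp [Nat.mod_eq_of_lt i.isLt]
  | succ k ih =>
    have := i.neZero
    rw [pow_succ', Perm.mul_apply, finRotate_apply, Fin.val_add, ih, Fin.val_one', ← Nat.add_mod,
      Nat.add_assoc]

lemma permVal_mul_inv_finRotate_pow {n : ℕ} (σ : Perm (Fin n)) (k : ℕ) {a : ℕ}
    (ha : a ∈ Set.Icc 1 n) :
    permVal (σ * (finRotate n)⁻¹ ^ k) (rotval n k a) = permVal σ a := by
  obtain ⟨ha1, ha2⟩ := ha
  obtain ⟨hb1, hb2⟩ := rotval_mem_Icc (by omega : 0 < n) k a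
  unfold permVal
  rw [dif_pos (by omega : rotval n k a - 1 < n), dif_pos (by omega : a - 1 < n),
    Perm.mul_apply, inv_pow, Perm.inv_eq_iff_eq.mpr]
  ext
  rw [coe_finRotate_pow_apply]
  show (a + k - 1) % n + 1 - 1 = _
  rw [Nat.add_sub_cancel, Nat.sub_add_comm ha1]

lemma mem_DesPerm_iff {n : ℕ} (σ : Perm (Fin n)) (i : ℕ) :
    i ∈ DesPerm σ ↔ (1 ≤ i ∧ i < n) ∧ permVal σ (rotval n 1 i) < permVal σ i := by
  simp only [DesPerm, Finset.mem_filter, Finset.mem_Icc]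
  constructor
  · rintro ⟨⟨h1, h2⟩, h⟩
    exact ⟨⟨h1, by omega⟩, by rwa [rotval_one_of_lt (by omega)]⟩
  · rintro ⟨⟨h1, h2⟩, h⟩
    exact ⟨⟨h1, by omega⟩, by rwa [rotval_one_of_lt h2] at h⟩

lemma cDesPerm_eq_filter {n : ℕ} (σ : Perm (Fin n)) :
    cDesPerm σ = (Finset.Icc 1 n).filter fun i => permVal σ (rotval n 1 i) < permVal σ i := by
  ext i
  simp only [Finset.mem_filter, Finset.mem_Icc]
  rcases lt_trichotomy i n with hi | rfl | hi
  · have : i ∈ cDesPerm σ ↔ i ∈ DesPerm σ := by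
      unfold cDesPerm
      split_ifs
      · exact Finset.mem_insert.trans (or_iff_right hi.ne)
      · rfl
    rw [this, mem_DesPerm_iff]
    exact and_congr_left fun _ => ⟨fun h => ⟨h.1, hi.le⟩, fun h => ⟨h.1, hi⟩⟩
  · have hnot : i ∉ DesPerm σ := fun h => lt_irrefl i ((mem_DesPerm_iff σ i).1 h).1.2
    rw [rotval_one_self]
    unfold cDesPerm
    split_ifs with hc
    · have : 1 ≤ i := by
        by_contra h0
        simp [permVal, show i = 0 by omega] at hc
      simp [this, hc]
    · simp [hnot, hc]
  · have : i ∉ cDesPerm σ := by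
      unfold cDesPerm
      split_ifs <;> simp only [Finset.mem_insert, mem_DesPerm_iff] <;> omega
    exact iff_of_false this fun h => by omega

section Filling

variable {n : ℕ} {cells : Finset (ℕ × ℕ)} {f : ℕ × ℕ → ℕ}

lemma cellOf_eq_of_unique {e : ℕ} {c : ℕ × ℕ} (hc : c ∈ cells) (he : f c = e)
    (huniq : ∀ c', f c' = e → c' = c) : cellOf cells f e = c := by
  have hrow : rowOf cells f e = c.1 := by
    have hset : {i | ∃ j, (i, j) ∈ cells ∧ f (i, j) = e} = {c.1} := by
      ext i
      refine ⟨fun ⟨j, _, hj⟩ => congrArg Prod.fst (huniq _ hj), fun hi => ⟨c.2, ?_⟩⟩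
      rw [Set.mem_singleton_iff.mp hi]
      exact ⟨hc, he⟩
    rw [rowOf, hset, csInf_singleton]
  have hset : {j | (c.1, j) ∈ cells ∧ f (c.1, j) = e} = {c.2} := by
    ext j
    refine ⟨fun ⟨_, hj⟩ => congrArg Prod.snd (huniq _ hj), fun hj => ?_⟩
    rw [Set.mem_singleton_iff.mp hj]
    exact ⟨hc, he⟩
  rw [cellOf, hrow, hset, csInf_singleton]

lemma IsFillingF.cellOf_apply (hf : IsFillingF n cells f) {c : ℕ × ℕ} (hc : c ∈ cells) :
    cellOf cells f (f c) = c := by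
  refine cellOf_eq_of_unique hc rfl fun c' hc' => ?_
  by_cases hmem : c' ∈ cells
  · exact hf.1.injOn hmem hc hc'
  · have := (hf.1.mapsTo hc).1
    rw [← hc', hf.2 c' hmem] at this
    omega

lemma IsFillingF.mapEntries_of_bijOn {φ : ℕ → ℕ} (hf : IsFillingF n cells f)
    (hφ : Set.BijOn φ (Set.Icc 1 n) (Set.Icc 1 n)) : IsFillingF n cells (mapEntries cells φ f) :=
  ⟨(hφ.comp hf.1).congr fun _ hc => (if_pos hc).symm, fun _ hc => if_neg hc⟩

lemma IsFillingF.cellOf_mapEntries {φ : ℕ → ℕ} (hf : IsFillingF n cells f)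
    (hφ : Set.BijOn φ (Set.Icc 1 n) (Set.Icc 1 n)) {a : ℕ} (ha : a ∈ Set.Icc 1 n) :
    cellOf cells (mapEntries cells φ f) (φ a) = cellOf cells f a := by
  obtain ⟨c, hc, rfl⟩ := hf.1.surjOn ha
  have happ : mapEntries cells φ f c = φ (f c) := if_pos hc
  rw [← happ, (hf.mapEntries_of_bijOn hφ).cellOf_apply hc, hf.cellOf_apply hc]

lemma IsFillingF.rowOf_mapEntries {φ : ℕ → ℕ} (hf : IsFillingF n cells f)
    (hφ : Set.BijOn φ (Set.Icc 1 n) (Set.Icc 1 n)) {a : ℕ} (ha : a ∈ Set.Icc 1 n) :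
    rowOf cells (mapEntries cells φ f) (φ a) = rowOf cells f a :=
  congrArg Prod.fst (hf.cellOf_mapEntries hφ ha)

lemma IsFillingF.invReadVal_mapEntries {φ : ℕ → ℕ} (hf : IsFillingF n cells f)
    (hφ : Set.BijOn φ (Set.Icc 1 n) (Set.Icc 1 n)) {a : ℕ} (ha : a ∈ Set.Icc 1 n) :
    invReadVal cells (mapEntries cells φ f) (φ a) = invReadVal cells f a :=
  congrArg (posInRead cells) (hf.cellOf_mapEntries hφ ha)

end Filling

lemma posInRead_lt_of_readBefore {cells : Finset (ℕ × ℕ)} {a b : ℕ × ℕ} (ha : a ∈ cells)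
    (h : readBefore a b) : posInRead cells a < posInRead cells b := by
  have hsub : cells.filter (readBefore · a) ⊆ cells.filter (readBefore · b) :=
    Finset.monotone_filter_right _ fun c hc => by unfold readBefore at *; omega
  have hss : cells.filter (readBefore · a) ⊂ cells.filter (readBefore · b) :=
    (Finset.ssubset_iff_of_subset hsub).mpr
      ⟨a, Finset.mem_filter.mpr ⟨ha, h⟩, fun h' => by
        have := (Finset.mem_filter.mp h').2; unfold readBefore at this; omega⟩
  exact Nat.succ_lt_succ (Finset.card_lt_card hss)

lemma fst_lt_fst_iff_posInRead_lt {cells : Finset (ℕ × ℕ)} {a b : ℕ × ℕ}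
    (ha : a ∈ cells) (hb : b ∈ cells) (hrow : a.1 = b.1 → a.2 ≤ b.2) :
    a.1 < b.1 ↔ posInRead cells b < posInRead cells a := by
  rcases lt_trichotomy a.1 b.1 with h | h | h
  · exact iff_of_true h (posInRead_lt_of_readBefore hb (Or.inl h))
  · rcases (hrow h).lt_or_eq with h2 | h2
    · exact iff_of_false h.not_lt (lt_asymm (posInRead_lt_of_readBefore ha (Or.inr ⟨h, h2⟩)))
    · rw [Prod.ext h h2]
      exact iff_of_false (lt_irrefl _) (lt_irrefl _)
  · exact iff_of_false (lt_asymm h) (lt_asymm (posInRead_lt_of_readBefore ha (Or.inl h)))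

lemma boxCell_mem (lam : YoungDiagram) : boxCell lam ∈ boxShape lam :=
  Finset.mem_insert_self _ _

lemma eq_boxCell_of_fst_eq_zero {lam : YoungDiagram} {c : ℕ × ℕ} (hc : c ∈ boxShape lam)
    (h0 : c.1 = 0) : c = boxCell lam := by
  rcases Finset.mem_insert.mp hc with h | h
  · exact h
  · obtain ⟨d, _, rfl⟩ := Finset.mem_image.mp h
    exact absurd h0 (Nat.succ_ne_zero _)

lemma boxShape_rowOf_lt_iff {n : ℕ} {lam : YoungDiagram} {T : ℕ × ℕ → ℕ}
    (hT : IsFillingF n (boxShape lam) T) (hstd : IsStandardF (boxShape lam) T)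
    (hdelta : deltaOf lam T = n) {a : ℕ} (ha : a ∈ Set.Icc 1 n) :
    rowOf (boxShape lam) T a < rowOf (boxShape lam) T (rotval n 1 a) ↔
      invReadVal (boxShape lam) T (rotval n 1 a) < invReadVal (boxShape lam) T a := by
  obtain ⟨ca, hca, rfl⟩ := hT.1.surjOn ha
  obtain ⟨cb, hcb, hcb_eq⟩ := hT.1.surjOn (rotval_mem_Icc (ha.1.trans ha.2) 1 (T ca))
  rw [← hcb_eq]
  show (cellOf _ T (T ca)).1 < (cellOf _ T (T cb)).1 ↔
    posInRead _ (cellOf _ T (T cb)) < posInRead _ (cellOf _ T (T ca))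
  rw [hT.cellOf_apply hca, hT.cellOf_apply hcb]
  refine fst_lt_fst_iff_posInRead_lt hca hcb fun hrow => ?_
  by_cases htop : T ca = n
  · have hbox : ca = boxCell lam := hT.1.injOn hca (boxCell_mem lam) (htop.trans hdelta.symm)
    have : cb = boxCell lam := eq_boxCell_of_fst_eq_zero hcb (hrow ▸ hbox ▸ rfl)
    rw [hbox, this]
  · have hsucc : T cb = T ca + 1 := hcb_eq.trans (rotval_one_of_lt (lt_of_le_of_ne ha.2 htop))
    by_contra! hlt
    have := hstd.1 cb hcb ca hca hrow.symm hlt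
    omega

lemma rotated_rowOf_lt_iff {n k : ℕ} {lam : YoungDiagram} {T : ℕ × ℕ → ℕ}
    (hT : IsFillingF n (boxShape lam) T) (hstd : IsStandardF (boxShape lam) T)
    (hdelta : deltaOf lam T = n) {e : ℕ} (he : e ∈ Set.Icc 1 n) :
    rowOf (boxShape lam) (mapEntries (boxShape lam) (rotval n k) T) e <
        rowOf (boxShape lam) (mapEntries (boxShape lam) (rotval n k) T) (rotval n 1 e) ↔
      invReadVal (boxShape lam) (mapEntries (boxShape lam) (rotval n k) T) (rotval n 1 e) <
        invReadVal (boxShape lam) (mapEntries (boxShape lam) (rotval n k) T) e := by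
  have hn : 0 < n := he.1.trans he.2
  have hrot := rotval_bijOn hn k
  obtain ⟨a, ha, rfl⟩ := hrot.surjOn he
  have ha' := rotval_mem_Icc hn 1 a
  rw [rotval_comm n 1 k ha.1, hT.rowOf_mapEntries hrot ha, hT.rowOf_mapEntries hrot ha',
    hT.invReadVal_mapEntries hrot ha, hT.invReadVal_mapEntries hrot ha']
  exact boxShape_rowOf_lt_iff hT hstd hdelta ha

section DescentSets

variable {n : ℕ} {cells : Finset (ℕ × ℕ)} {R : ℕ × ℕ → ℕ} {σ : Perm (Fin n)}

lemma cDesRot_eq_cDesPerm (hσ : ∀ e ∈ Finset.Icc 1 n, permVal σ e = invReadVal cells R e)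
    (hrow : ∀ e ∈ Set.Icc 1 n, rowOf cells R e < rowOf cells R (rotval n 1 e) ↔
      invReadVal cells R (rotval n 1 e) < invReadVal cells R e) :
    cDesRot n cells R = cDesPerm σ := by
  rw [cDesPerm_eq_filter]
  refine Finset.filter_congr fun e he => ?_
  have he' : e ∈ Set.Icc 1 n := Finset.mem_Icc.1 he
  rw [hrow e he', hσ e he, hσ _ (Finset.mem_Icc.2 (rotval_mem_Icc (he'.1.trans he'.2) 1 e))]

lemma DesTab_eq_DesPerm (hσ : ∀ e ∈ Finset.Icc 1 n, permVal σ e = invReadVal cells R e)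
    (hrow : ∀ e ∈ Set.Icc 1 n, rowOf cells R e < rowOf cells R (rotval n 1 e) ↔
      invReadVal cells R (rotval n 1 e) < invReadVal cells R e) :
    DesTab n cells R = DesPerm σ := by
  refine Finset.filter_congr fun i hi => ?_
  obtain ⟨h1, h2⟩ := Finset.mem_Icc.1 hi
  have hi' : i ∈ Set.Icc 1 n := ⟨h1, by omega⟩
  rw [← rotval_one_of_lt (by omega : i < n), hrow i hi', hσ i (Finset.mem_Icc.2 hi'),
    hσ _ (Finset.mem_Icc.2 (rotval_mem_Icc (by omega) 1 i))]

end DescentSets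

theorem invReadWord_of_rotated_general (n : ℕ) (lam : YoungDiagram)
    (T : ℕ × ℕ → ℕ) (hT : IsFillingF n (boxShape lam) T)
    (hstd : IsStandardF (boxShape lam) T) (hdelta : deltaOf lam T = n)
    (π : Equiv.Perm (Fin n))
    (hπ : ∀ e ∈ Finset.Icc 1 n, permVal π e = invReadVal (boxShape lam) T e)
    (k : ℕ) :
    (∀ e ∈ Finset.Icc 1 n,
      permVal (π * ((finRotate n)⁻¹) ^ k) e =
        invReadVal (boxShape lam) (mapEntries (boxShape lam) (rotval n k) T) e) ∧
    cDesRot n (boxShape lam) (mapEntries (boxShape lam) (rotval n k) T) =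
      cDesPerm (π * ((finRotate n)⁻¹) ^ k) ∧
    DesTab n (boxShape lam) (mapEntries (boxShape lam) (rotval n k) T) =
      DesPerm (π * ((finRotate n)⁻¹) ^ k) := by
  obtain ⟨hbox1, hboxn⟩ := hT.1.mapsTo (boxCell_mem lam)
  have hrot := rotval_bijOn (hbox1.trans hboxn) k
  have hword : ∀ e ∈ Finset.Icc 1 n, permVal (π * (finRotate n)⁻¹ ^ k) e =
      invReadVal (boxShape lam) (mapEntries (boxShape lam) (rotval n k) T) e := by
    intro e he
    obtain ⟨a, ha, rfl⟩ := hrot.surjOn (Finset.mem_Icc.1 he)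
    rw [permVal_mul_inv_finRotate_pow π k ha, hπ a (Finset.mem_Icc.2 ha),
      hT.invReadVal_mapEntries hrot ha]
  have hrow := fun e (he : e ∈ Set.Icc 1 n) => rotated_rowOf_lt_iff (k := k) hT hstd hdelta he
  exact ⟨hword, cDesRot_eq_cDesPerm hword hrow, DesTab_eq_DesPerm hword hrow⟩

/-- Let `λ ⊢ n-1`, `T ∈ SYT(λ^□)` with `δ(T) = n`, and let `π ∈ S_n` be
the inverse reading word of `T`. Then for every `0 ≤ k < n`: the inverse reading word of
the rotated tableau `k+T` is `π c^{-k}`, and `cDes_rot(k+T) = cDes(π c^{-k})`; in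
particular `Des(k+T) = Des(π c^{-k})`. -/
theorem invReadWord_of_rotated (n : ℕ) (lam : YoungDiagram)
    (hlam : lam.cells.card = n - 1)
    (T : ℕ × ℕ → ℕ) (hT : IsFillingF n (boxShape lam) T)
    (hstd : IsStandardF (boxShape lam) T) (hdelta : deltaOf lam T = n)
    (π : Equiv.Perm (Fin n))
    (hπ : ∀ e ∈ Finset.Icc 1 n, permVal π e = invReadVal (boxShape lam) T e)
    (k : ℕ) (hk : k < n) :
    (∀ e ∈ Finset.Icc 1 n,
      permVal (π * ((finRotate n)⁻¹) ^ k) e =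
        invReadVal (boxShape lam) (mapEntries (boxShape lam) (rotval n k) T) e) ∧
    cDesRot n (boxShape lam) (mapEntries (boxShape lam) (rotval n k) T) =
      cDesPerm (π * ((finRotate n)⁻¹) ^ k) ∧
    DesTab n (boxShape lam) (mapEntries (boxShape lam) (rotval n k) T) =
      DesPerm (π * ((finRotate n)⁻¹) ^ k) :=
  invReadWord_of_rotated_general n lam T hT hstd hdelta π hπ k

end SchurRot
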